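/- Equivalent forms of the second dominance condition (Lemma B.5). Let λ, μ, ω, η be partitions with |λ| ≥ |ω| and |λ| + |μ| = |ω| + |η|, and set d = |λ| − |ω|. Then the following three conditions are equivalent: (1) for every j ≥ 1, |λ| + μ_1 + ⋯ + μ_j ≥ |ω| + η_1 + ⋯ + η_j; (2) η' ⪰ μ' ∪ (1^d), i.e. the partition obtained by appending d parts equal to 1 to μ' is dominated by η'; (3) η' ⪰ μ'. -/

import Mathlib

/-!
For partitions `α, β`, dual dominance `α' ⪰ β'` amounts to
`|α| - (α₁ + ⋯ + αⱼ) ≥ |β| - (β₁ + ⋯ + βⱼ)` for all `j`. Indeed, for every `t`,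
`α'₁ + ⋯ + α'ₖ = ∑ᵢ min(αᵢ, k) ≤ t k + |α| - (α₁ + ⋯ + αₜ)`, with equality when `αᵢ ≥ k` for
`i ≤ t` and `αᵢ ≤ k` for `i > t`, e.g. for `t = α'ₖ₊₁`, or for `k = αₜ`.

Adding `d` to the first part of `μ` gives `ν` with `ν' = μ' ∪ (1^d)` and `|ν| = |μ| + d = |η|`.
By the criterion, (2) and (3) both say `|η| - (η₁ + ⋯ + ηⱼ) ≥ |μ| - (μ₁ + ⋯ + μⱼ)` for `j ≥ 1`,
which is (1) rewritten using `|η| = |μ| + d`.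
-/

noncomputable section

namespace DoubleMacdonald

/-- A partition, encoded as a weakly decreasing function `ℕ → ℕ` (0-indexed: `f 0 = λ₁`)
with finitely many nonzero values. -/
def IsPartition (f : ℕ → ℕ) : Prop :=
  (∀ ⦃i j : ℕ⦄, i ≤ j → f j ≤ f i) ∧ ∃ N, ∀ i, N ≤ i → f i = 0

/-- The size `|λ| = Σᵢ λᵢ` of a partition. -/
def psize (f : ℕ → ℕ) : ℕ := ∑ᶠ i, f i

/-- The number `ℓ(λ)` of nonzero parts of a partition. -/
def plen (f : ℕ → ℕ) : ℕ := Nat.card {i : ℕ | 1 ≤ f i}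

/-- The conjugate partition: `λ'ⱼ = #{i : λᵢ ≥ j}` (0-indexed: `conj f j = λ'_{j+1}`). -/
def conj (f : ℕ → ℕ) : ℕ → ℕ := fun j => Nat.card {i : ℕ | j + 1 ≤ f i}

/-- The staircase partition `δ^m = (m-1, m-2, …, 1, 0)`. -/
def delta (m : ℕ) : ℕ → ℕ := fun i => m - 1 - i

/-- Componentwise sum of partitions. -/
def addF (f g : ℕ → ℕ) : ℕ → ℕ := fun i => f i + g i

/-- Union `λ ∪ μ` of partitions: the weakly decreasing rearrangement of the combined
multiset of parts, defined via `(λ ∪ μ)' = λ' + μ'`. -/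
def unionF (f g : ℕ → ℕ) : ℕ → ℕ := conj (addF (conj f) (conj g))

/-- Partial sum `λ₁ + ⋯ + λ_k`. -/
def psum (f : ℕ → ℕ) (k : ℕ) : ℕ := ∑ i ∈ Finset.range k, f i

/-- The statistic `n(λ) = Σᵢ (i-1) λᵢ`. -/
def nstat (f : ℕ → ℕ) : ℕ := ∑ᶠ i, i * f i

/-- The (extended) dominance order: `f ⪰ g` iff all partial sums of `f` dominate those of `g`. -/
def Dominates (f g : ℕ → ℕ) : Prop := ∀ k, psum g k ≤ psum f k

/-- The partition `(1^d)` consisting of `d` parts equal to `1`. -/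
def ones (d : ℕ) : ℕ → ℕ := fun i => if i < d then 1 else 0

open Finset

variable {f g : ℕ → ℕ} {N : ℕ}

lemma psize_eq_sum_range (hN : ∀ i, N ≤ i → f i = 0) : psize f = ∑ i ∈ range N, f i :=
  finsum_eq_sum_of_support_subset f fun i hi => by
    by_contra h
    exact hi (hN i (by simpa using h))

lemma conj_eq_card_filter (hN : ∀ i, N ≤ i → f i = 0) (k : ℕ) :
    conj f k = #{i ∈ range N | k < f i} := by
  have hset : {i | k + 1 ≤ f i} = (({i ∈ range N | k < f i} : Finset ℕ) : Set ℕ) := by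
    ext i
    simp only [Set.mem_ofPred_eq, coe_filter, mem_range]
    refine ⟨fun h => ⟨?_, h⟩, fun h => h.2⟩
    by_contra hi
    have := hN i (not_lt.mp hi)
    omega
  rw [conj, hset, Nat.card_coe_set_eq, Set.ncard_coe_finset]

lemma psum_conj (hN : ∀ i, N ≤ i → f i = 0) (k : ℕ) :
    psum (conj f) k = ∑ i ∈ range N, min (f i) k := by
  have hcount (i : ℕ) : #{j ∈ range k | j < f i} = min (f i) k := by
    rw [show {j ∈ range k | j < f i} = range (min (f i) k) by ext; simp; omega, card_range]
  simp only [psum, conj_eq_card_filter hN, card_filter]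
  rw [sum_comm]
  simp only [← card_filter, hcount]

lemma psum_conj_add_psum_le (hN : ∀ i, N ≤ i → f i = 0) (t k : ℕ) :
    psum (conj f) k + psum f t ≤ t * k + psize f := by
  have hN' : ∀ i, N + t ≤ i → f i = 0 := fun i hi => hN i (by omega)
  rw [psum_conj hN', psize_eq_sum_range hN', psum,
    ← sum_range_add_sum_Ico _ (Nat.le_add_left t N),
    ← sum_range_add_sum_Ico _ (Nat.le_add_left t N)]
  have hhead : ∑ i ∈ range t, min (f i) k ≤ t * k := by
    simpa using sum_le_card_nsmul (range t) _ k fun i _ => min_le_right (f i) k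
  have htail : ∑ i ∈ Ico t (N + t), min (f i) k ≤ ∑ i ∈ Ico t (N + t), f i :=
    sum_le_sum fun i _ => min_le_left (f i) k
  omega

lemma psum_conj_add_psum_eq (hN : ∀ i, N ≤ i → f i = 0) {t k : ℕ}
    (hhead : ∀ i < t, k ≤ f i) (htail : ∀ i, t ≤ i → f i ≤ k) :
    psum (conj f) k + psum f t = t * k + psize f := by
  have hN' : ∀ i, N + t ≤ i → f i = 0 := fun i hi => hN i (by omega)
  rw [psum_conj hN', psize_eq_sum_range hN', psum,
    ← sum_range_add_sum_Ico _ (Nat.le_add_left t N),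
    ← sum_range_add_sum_Ico _ (Nat.le_add_left t N)]
  have hhead' : ∑ i ∈ range t, min (f i) k = t * k := by
    rw [sum_congr rfl fun i hi => min_eq_right (hhead i (mem_range.mp hi))]
    simp
  have htail' : ∑ i ∈ Ico t (N + t), min (f i) k = ∑ i ∈ Ico t (N + t), f i :=
    sum_congr rfl fun i hi => min_eq_left (htail i (mem_Ico.mp hi).1)
  omega

namespace IsPartition

lemma exists_setOf_lt_eq_Iio (hf : IsPartition f) (k : ℕ) : ∃ m, {i | k < f i} = Set.Iio m := by
  obtain ⟨N, hN⟩ := hf.2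
  have hex : ∃ m, f m ≤ k := ⟨N, by simp [hN N le_rfl]⟩
  refine ⟨Nat.find hex, Set.ext fun i => ?_⟩
  simp only [Set.mem_ofPred_eq, Set.mem_Iio, Nat.lt_find_iff, not_le]
  exact ⟨fun hi m hm => hi.trans_le (hf.1 hm), fun h => h i le_rfl⟩

lemma lt_conj_iff (hf : IsPartition f) (k i : ℕ) : i < conj f k ↔ k < f i := by
  obtain ⟨m, hm⟩ := hf.exists_setOf_lt_eq_Iio k
  have hconj : conj f k = m := by
    rw [conj, show {i | k + 1 ≤ f i} = Set.Iio m from hm, ← coe_range, Nat.card_coe_set_eq,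
      Set.ncard_coe_finset, card_range]
  rw [hconj, ← Set.mem_Iio, ← hm, Set.mem_ofPred_eq]

lemma conj_conj (hf : IsPartition f) : conj (conj f) = f := by
  funext i
  rw [conj, show {k | i + 1 ≤ conj f k} = Set.Iio (f i) from Set.ext fun k => hf.lt_conj_iff k i,
    ← coe_range, Nat.card_coe_set_eq, Set.ncard_coe_finset, card_range]

lemma addF (hf : IsPartition f) (hg : IsPartition g) : IsPartition (addF f g) := by
  obtain ⟨Nf, hNf⟩ := hf.2
  obtain ⟨Ng, hNg⟩ := hg.2
  refine ⟨fun i j hij => Nat.add_le_add (hf.1 hij) (hg.1 hij), Nf + Ng, fun i hi => ?_⟩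
  simp [DoubleMacdonald.addF, hNf i (by omega), hNg i (by omega)]

lemma single_zero (d : ℕ) : IsPartition (Pi.single 0 d) := by
  refine ⟨fun i j hij => ?_, 1, fun i hi => by simp [show i ≠ 0 by omega]⟩
  rcases Nat.eq_zero_or_pos j with rfl | hj
  · rw [Nat.le_zero.mp hij]
  · simp [Pi.single_eq_of_ne (Nat.pos_iff_ne_zero.mp hj)]

theorem conj_dominates_conj_iff {α β : ℕ → ℕ} (hα : IsPartition α) (hβ : IsPartition β) :
    Dominates (conj α) (conj β) ↔ ∀ j, psum α j + psize β ≤ psum β j + psize α := by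
  obtain ⟨Nα, hNα⟩ := hα.2
  obtain ⟨Nβ, hNβ⟩ := hβ.2
  constructor
  · intro h j
    have hβeq := psum_conj_add_psum_eq (t := j) (k := β (j - 1)) hNβ
      (fun i hi => hβ.1 (by omega)) (fun i hi => hβ.1 (by omega))
    have hαle := psum_conj_add_psum_le hNα j (β (j - 1))
    have := h (β (j - 1))
    omega
  · intro h k
    have hαeq := psum_conj_add_psum_eq (t := conj α k) hNα
      (fun i hi => ((hα.lt_conj_iff k i).mp hi).le)
      (fun i hi => not_lt.mp fun hk => (not_lt.mpr hi) ((hα.lt_conj_iff k i).mpr hk))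
    have hβle := psum_conj_add_psum_le hNβ (conj α k) k
    have := h (conj α k)
    omega

lemma conj_dominates_conj_iff_of_psize_le {α β : ℕ → ℕ} (hα : IsPartition α)
    (hβ : IsPartition β) (hsize : psize β ≤ psize α) :
    Dominates (conj α) (conj β) ↔ ∀ j, 1 ≤ j → psum α j + psize β ≤ psum β j + psize α := by
  rw [hα.conj_dominates_conj_iff hβ]
  refine ⟨fun h j _ => h j, fun h j => ?_⟩
  rcases Nat.eq_zero_or_pos j with rfl | hj
  · simpa [psum] using hsize
  · exact h j hj

end IsPartition

lemma conj_ones (d : ℕ) : conj (ones d) = Pi.single 0 d := by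
  funext j
  rw [conj_eq_card_filter (N := d) (fun i hi => by simp [ones]; omega)]
  rcases Nat.eq_zero_or_pos j with rfl | hj
  · rw [filter_true_of_mem fun i hi => by simp [ones, mem_range.mp hi]]
    simp
  · rw [filter_false_of_mem fun i _ => by simp only [ones]; split_ifs <;> omega,
      Pi.single_eq_of_ne (Nat.pos_iff_ne_zero.mp hj)]
    rfl

lemma psum_addF (f g : ℕ → ℕ) (k : ℕ) : psum (addF f g) k = psum f k + psum g k :=
  sum_add_distrib

lemma psum_single_zero {d k : ℕ} (hk : 1 ≤ k) : psum (Pi.single 0 d) k = d := by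
  simp [psum, sum_pi_single']
  omega

lemma exists_conj_eq_unionF_conj_ones {μ : ℕ → ℕ} (hμ : IsPartition μ) (d : ℕ) :
    ∃ ν, IsPartition ν ∧ conj ν = unionF (conj μ) (ones d) ∧ psize ν = psize μ + d ∧
      ∀ j, 1 ≤ j → psum ν j = psum μ j + d := by
  obtain ⟨N, hN⟩ := hμ.2
  have hsum (j : ℕ) (hj : 1 ≤ j) : psum (addF μ (Pi.single 0 d)) j = psum μ j + d := by
    rw [psum_addF, psum_single_zero hj]
  refine ⟨addF μ (Pi.single 0 d), hμ.addF (.single_zero d), ?_, ?_, hsum⟩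
  · rw [unionF, hμ.conj_conj, conj_ones]
  · have hN' : ∀ i, N + 1 ≤ i → addF μ (Pi.single 0 d) i = 0 := fun i hi => by
      simp [addF, hN i (by omega), Pi.single_eq_of_ne (show i ≠ 0 by omega)]
    rw [psize_eq_sum_range hN', psize_eq_sum_range (N := N + 1) fun i hi => hN i (by omega),
      ← psum, ← psum, hsum _ (Nat.le_add_left 1 N)]

theorem second_dominance_condition_equiv_general (lam mu om eta : ℕ → ℕ)
    (hmu : IsPartition mu) (heta : IsPartition eta)
    (hge : psize om ≤ psize lam)
    (heq : psize lam + psize mu = psize om + psize eta) :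
    ((∀ j, 1 ≤ j → psize om + psum eta j ≤ psize lam + psum mu j) ↔
        Dominates (conj eta) (unionF (conj mu) (ones (psize lam - psize om)))) ∧
    (Dominates (conj eta) (unionF (conj mu) (ones (psize lam - psize om))) ↔
        Dominates (conj eta) (conj mu)) := by
  set d := psize lam - psize om
  obtain ⟨nu, hnu, hunion, hnu_size, hnu_psum⟩ := exists_conj_eq_unionF_conj_ones hmu d
  set tails := ∀ j, 1 ≤ j → psum eta j ≤ psum mu j + d
  have h1 : (∀ j, 1 ≤ j → psize om + psum eta j ≤ psize lam + psum mu j) ↔ tails :=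
    forall₂_congr fun j _ => by omega
  have h2 : Dominates (conj eta) (conj nu) ↔ tails := by
    rw [heta.conj_dominates_conj_iff_of_psize_le hnu (by omega)]
    exact forall₂_congr fun j hj => by have := hnu_psum j hj; omega
  have h3 : Dominates (conj eta) (conj mu) ↔ tails := by
    rw [heta.conj_dominates_conj_iff_of_psize_le hmu (by omega)]
    exact forall₂_congr fun j _ => by omega
  rw [← hunion]
  exact ⟨h1.trans h2.symm, h2.trans h3.symm⟩

/-- **Equivalent forms of the second dominance condition** (Lemma B.5).
Let `λ, μ, ω, η` be partitions with `|λ| ≥ |ω|` and `|λ| + |μ| = |ω| + |η|`, and set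
`d = |λ| − |ω|`.  The following are equivalent:
(1) `|λ| + μ₁ + ⋯ + μⱼ ≥ |ω| + η₁ + ⋯ + ηⱼ` for all `j ≥ 1`;
(2) `η' ⪰ μ' ∪ (1^d)`;
(3) `η' ⪰ μ'`. -/
theorem second_dominance_condition_equiv (lam mu om eta : ℕ → ℕ)
    (hlam : IsPartition lam) (hmu : IsPartition mu)
    (hom : IsPartition om) (heta : IsPartition eta)
    (hge : psize om ≤ psize lam)
    (heq : psize lam + psize mu = psize om + psize eta) :
    ((∀ j, 1 ≤ j → psize om + psum eta j ≤ psize lam + psum mu j) ↔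
        Dominates (conj eta) (unionF (conj mu) (ones (psize lam - psize om)))) ∧
    (Dominates (conj eta) (unionF (conj mu) (ones (psize lam - psize om))) ↔
        Dominates (conj eta) (conj mu)) :=
  second_dominance_condition_equiv_general lam mu om eta hmu heta hge heq

end DoubleMacdonald
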